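/- arXiv:2006.05073 — 3 statements merged into one kernel-verified Lean document; each statement's English description precedes it below -/
import Mathlib

section
/- Mass conservation of the SAV–Gauss collocation scheme (Theorem 3.1, first part): under the abstract Gauss collocation SAV scheme, if additionally ⟨G(v), v⟩ ∈ ℝ for every v ∈ V, then ‖u_h(t_n)‖ = ‖u_h(0)‖ for every n = 1, ..., N. -/
open MeasureTheory

/-- The (unnormalized) Legendre polynomial of degree `k`: `d^k/dx^k [(x² - 1)^k]`. -/
noncomputable def legendre (k : ℕ) : Polynomial ℝ :=
  Polynomial.derivative^[k] ((Polynomial.X ^ 2 - 1 : Polynomial ℝ) ^ k)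

/-- `f : ℝ → X` is an `X`-valued polynomial of degree at most `m`. -/
def IsPolyDeg (X : Type*) [AddCommGroup X] [Module ℝ X] (m : ℕ) (f : ℝ → X) : Prop :=
  ∃ φ : Fin (m + 1) → X, ∀ t : ℝ, f t = ∑ i : Fin (m + 1), t ^ (i : ℕ) • φ i

/-- The `j`-th Gauss collocation point `t_{nj} = t_{n-1} + (1 + c_j) τ / 2` of the
interval `I_n = [(n-1)τ, nτ]`. -/
noncomputable def collocPt (τ : ℝ) (n : ℕ) (cj : ℝ) : ℝ :=
  ((n : ℝ) - 1) * τ + (1 + cj) * τ / 2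

/-!
On each interval `I_n`, `t ↦ ‖u_h(t)‖²` is a real polynomial of degree `≤ 2k` whose derivative
`2 Re⟨u_h, u_h'⟩` vanishes at the Gauss points: test (i) with `v = u_h(t_nj)` and take imaginary
parts, `a(v, v)` and `⟨G v, v⟩` being real. Gauss quadrature with `k` nodes is exact in degree
`< 2k`, so the derivative integrates to zero over `I_n` and `‖u_h(t_n)‖ = ‖u_h(t_{n-1})‖`.
-/

open Polynomial

namespace Polynomial

theorem eval_iterate_derivative_X_sq_sub_one_pow_eq_zero {R : Type*} [CommRing R] {k j : ℕ}
    (hj : j < k) {x : R} (hx : x ^ 2 = 1) :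
    (derivative^[j] ((X ^ 2 - 1 : R[X]) ^ k)).eval x = 0 := by
  obtain ⟨g, hg⟩ := pow_sub_dvd_iterate_derivative_pow (X ^ 2 - 1 : R[X]) k j
  rw [hg, eval_mul, eval_pow, eval_sub, eval_pow, eval_X, eval_one, hx, sub_self,
    zero_pow (by omega), zero_mul]

theorem degree_derivative_lt_of_degree_lt_succ {R : Type*} [Semiring R] {p : R[X]} {n : ℕ}
    (hp : p.degree < ↑(n + 1)) : (derivative p).degree < n := by
  rw [degree_lt_iff_coeff_zero] at hp ⊢
  intro m hm
  rw [coeff_derivative, hp (m + 1) (by omega), zero_mul]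

theorem integral_iterate_derivative_mul_eq_zero {P : ℝ[X]} {a b : ℝ} {i : ℕ}
    (ha : ∀ j < i, (derivative^[j] P).eval a = 0) (hb : ∀ j < i, (derivative^[j] P).eval b = 0)
    {q : ℝ[X]} (hq : q.degree < i) :
    ∫ x in a..b, (derivative^[i] P).eval x * q.eval x = 0 := by
  induction i generalizing q with
  | zero =>
    rw [Nat.cast_zero, Nat.WithBot.lt_zero_iff, degree_eq_bot] at hq
    simp [hq]
  | succ i ih =>
    have hibp := intervalIntegral.integral_mul_deriv_eq_deriv_mul (a := a) (b := b)
      (fun x _ => (derivative^[i] P).hasDerivAt x) (fun x _ => q.hasDerivAt x)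
      ((Polynomial.continuous _).intervalIntegrable _ _)
      ((Polynomial.continuous _).intervalIntegrable _ _)
    rw [ih (fun j hj => ha j (by omega)) (fun j hj => hb j (by omega))
      (degree_derivative_lt_of_degree_lt_succ hq), ha i (by omega), hb i (by omega),
      ← Function.iterate_succ_apply' derivative] at hibp
    simpa using hibp

end Polynomial

theorem integral_legendre_mul_eq_zero {k : ℕ} {q : ℝ[X]} (hq : q.degree < k) :
    ∫ x in (-1 : ℝ)..1, (legendre k).eval x * q.eval x = 0 :=
  integral_iterate_derivative_mul_eq_zero
    (fun _ hj => eval_iterate_derivative_X_sq_sub_one_pow_eq_zero hj (by norm_num))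
    (fun _ hj => eval_iterate_derivative_X_sq_sub_one_pow_eq_zero hj (by norm_num)) hq

theorem degree_legendre (k : ℕ) : (legendre k).degree = k := by
  have hmonic : (X ^ 2 - 1 : ℝ[X]).Monic := by
    simpa using monic_X_pow_sub_C (1 : ℝ) two_ne_zero
  have hdeg : ((X ^ 2 - 1 : ℝ[X]) ^ k).natDegree = k + k := by
    rw [hmonic.natDegree_pow, ← C_1, natDegree_X_pow_sub_C]
    ring
  have hcoeff : ((X ^ 2 - 1 : ℝ[X]) ^ k).coeff (k + k) = 1 :=
    hdeg ▸ (hmonic.pow k).coeff_natDegree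
  apply degree_eq_of_le_of_coeff_ne_zero
  · refine degree_le_of_natDegree_le ((natDegree_iterate_derivative _ k).trans ?_)
    omega
  · rw [legendre, coeff_iterate_derivative, hcoeff, nsmul_eq_mul, mul_one, Nat.cast_ne_zero,
      Ne, Nat.descFactorial_eq_zero_iff_lt]
    omega

theorem legendre_ne_zero (k : ℕ) : legendre k ≠ 0 := fun h => by
  simpa [h] using degree_legendre k

/-- Exactness of Gauss quadrature: the remainder of `D` modulo `legendre k` has degree `< k` and
vanishes at the `k` nodes, so `D = legendre k * q` with `deg q < k`. -/
theorem integral_eq_zero_of_eval_legendre_roots_eq_zero {k : ℕ} {c : Fin k → ℝ}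
    (hc : Function.Injective c) (hroot : ∀ j, (legendre k).eval (c j) = 0) {D : ℝ[X]}
    (hD : D.degree < ↑(2 * k)) (hDc : ∀ j, D.eval (c j) = 0) :
    ∫ x in (-1 : ℝ)..1, D.eval x = 0 := by
  set L := legendre k
  have hmod : D % L = 0 := by
    by_contra hr
    refine hr (eq_zero_of_natDegree_lt_card_of_eval_eq_zero _ hc (fun j => ?_) ?_)
    · rw [EuclideanDomain.mod_eq_sub_mul_div, eval_sub, eval_mul, hDc, hroot, zero_mul, sub_zero]
    · rw [Fintype.card_fin, natDegree_lt_iff_degree_lt hr, ← degree_legendre k]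
      exact degree_mod_lt _ (legendre_ne_zero k)
  have hdiv : D = L * (D / L) := by
    have := EuclideanDomain.div_add_mod D L
    rw [hmod, add_zero] at this
    exact this.symm
  have hquot : (D / L).degree < k := by
    rw [hdiv, degree_mul, degree_legendre] at hD
    by_cases hq : D / L = 0
    · simp [hq]
    rw [degree_eq_natDegree hq] at hD ⊢
    norm_cast at hD ⊢
    omega
  rw [hdiv]
  simp only [eval_mul]
  exact integral_legendre_mul_eq_zero hquot

theorem eval_one_eq_eval_neg_one_of_derivative_eval_legendre_roots_eq_zero {k : ℕ}
    {c : Fin k → ℝ} (hc : Function.Injective c) (hroot : ∀ j, (legendre k).eval (c j) = 0)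
    {M : ℝ[X]} (hM : M.natDegree ≤ 2 * k) (hMc : ∀ j, (derivative M).eval (c j) = 0) :
    M.eval 1 = M.eval (-1) := by
  have hdeg : (derivative M).degree < ↑(2 * k) :=
    degree_derivative_lt_of_degree_lt_succ
      (degree_le_natDegree.trans_lt (by exact_mod_cast Nat.lt_succ_of_le hM))
  have hint := integral_eq_zero_of_eval_legendre_roots_eq_zero hc hroot hdeg hMc
  rw [intervalIntegral.integral_eq_sub_of_hasDerivAt (fun x _ => M.hasDerivAt x)
    ((Polynomial.continuous _).intervalIntegrable _ _)] at hint
  linarith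

theorem eval_eq_eval_of_derivative_eval_collocPt_eq_zero {k : ℕ} {c : Fin k → ℝ}
    (hc : Function.Injective c) (hroot : ∀ j, (legendre k).eval (c j) = 0)
    {M : ℝ[X]} (hM : M.natDegree ≤ 2 * k) (τ : ℝ) (n : ℕ)
    (hMc : ∀ j, (derivative M).eval (collocPt τ n (c j)) = 0) :
    M.eval (n * τ) = M.eval ((n - 1) * τ) := by
  set A : ℝ[X] := C (τ / 2) * X + C ((n - 1) * τ + τ / 2)
  have hA : ∀ x, A.eval x = (n - 1) * τ + (1 + x) * τ / 2 := fun x => by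
    simp only [A, eval_add, eval_mul, eval_C, eval_X]
    ring
  have hcomp := eval_one_eq_eval_neg_one_of_derivative_eval_legendre_roots_eq_zero hc hroot
    (M := M.comp A) ?_ fun j => ?_
  · rw [eval_comp, eval_comp, hA, hA] at hcomp
    rwa [show (n - 1) * τ + (1 + 1) * τ / 2 = n * τ by ring,
      show (n - 1) * τ + (1 + -1) * τ / 2 = (n - 1) * τ by ring] at hcomp
  · calc (M.comp A).natDegree ≤ M.natDegree * A.natDegree := natDegree_comp_le
      _ ≤ 2 * k * 1 := Nat.mul_le_mul hM (natDegree_linear_le)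
      _ = 2 * k := mul_one _
  · rw [derivative_comp, eval_mul, eval_comp, hA, ← collocPt, hMc, mul_zero]

theorem IsPolyDeg.differentiable {X : Type*} [NormedAddCommGroup X] [NormedSpace ℝ X] {m : ℕ}
    {f : ℝ → X} (hf : IsPolyDeg X m f) : Differentiable ℝ f := by
  obtain ⟨φ, hφ⟩ := hf
  rw [funext hφ]
  fun_prop

theorem IsPolyDeg.exists_eval_eq_norm_sq {F : Type*} [NormedAddCommGroup F]
    [InnerProductSpace ℝ F] {m : ℕ} {f : ℝ → F} (hf : IsPolyDeg F m f) :
    ∃ M : ℝ[X], M.natDegree ≤ 2 * m ∧ ∀ t, M.eval t = ‖f t‖ ^ 2 := by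
  obtain ⟨φ, hφ⟩ := hf
  refine ⟨∑ i, ∑ j, C (inner ℝ (φ i) (φ j)) * X ^ ((i : ℕ) + j), ?_, fun t => ?_⟩
  · refine natDegree_sum_le_of_forall_le _ _ fun i _ => natDegree_sum_le_of_forall_le _ _
      fun j _ => (natDegree_C_mul_le _ _).trans ?_
    rw [natDegree_X_pow]
    omega
  · simp only [← real_inner_self_eq_norm_sq, hφ, sum_inner, inner_sum, real_inner_smul_left,
      real_inner_smul_right, eval_finsetSum, eval_mul, eval_C, eval_pow, eval_X, pow_add]
    refine Finset.sum_congr rfl fun i _ => Finset.sum_congr rfl fun j _ => ?_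
    rw [real_inner_comm]
    ring

theorem collocPt_mem_Ioo {τ : ℝ} (hτ : 0 < τ) (n : ℕ) {c : ℝ} (hc : c ∈ Set.Ioo (-1) 1) :
    collocPt τ n c ∈ Set.Ioo ((n - 1) * τ) (n * τ) := by
  obtain ⟨h1, h2⟩ := hc
  constructor <;> unfold collocPt <;> nlinarith

theorem norm_eq_of_inner_deriv_collocPt_eq_zero {F : Type*} [NormedAddCommGroup F]
    [InnerProductSpace ℝ F] {k : ℕ} {c : Fin k → ℝ} (hc : Function.Injective c)
    (hroot : ∀ j, (legendre k).eval (c j) = 0) (hmem : ∀ j, c j ∈ Set.Ioo (-1) 1)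
    {τ : ℝ} (hτ : 0 < τ) {n : ℕ} {u p : ℝ → F} (hp : IsPolyDeg F k p)
    (hup : ∀ t ∈ Set.Icc ((n - 1) * τ) (n * τ), u t = p t)
    (horth : ∀ j, inner ℝ (u (collocPt τ n (c j))) (deriv u (collocPt τ n (c j))) = 0) :
    ‖u (n * τ)‖ = ‖u ((n - 1) * τ)‖ := by
  obtain ⟨M, hMdeg, hM⟩ := hp.exists_eval_eq_norm_sq
  have hMc : ∀ j, (derivative M).eval (collocPt τ n (c j)) = 0 := fun j => by
    set t := collocPt τ n (c j)
    obtain ⟨h0, h1⟩ := collocPt_mem_Ioo hτ n (hmem j)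
    have hev : u =ᶠ[nhds t] p := Filter.eventuallyEq_of_mem (Icc_mem_nhds h0 h1) hup
    have hu : HasDerivAt u (deriv u t) t :=
      (hev.differentiableAt_iff.2 (hp.differentiable t)).hasDerivAt
    have hnorm : (fun s => M.eval s) =ᶠ[nhds t] fun s => ‖u s‖ ^ 2 :=
      hev.mono fun s hs => by simp only [hM, hs]
    rw [← Polynomial.deriv, hnorm.deriv_eq, hu.norm_sq.deriv, horth, mul_zero]
  have hends : (n - 1) * τ ≤ n * τ := by nlinarith
  rw [← pow_left_inj₀ (norm_nonneg _) (norm_nonneg _) two_ne_zero,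
    hup _ ⟨hends, le_rfl⟩, hup _ ⟨le_rfl, hends⟩, ← hM, ← hM]
  exact eval_eq_eval_of_derivative_eval_collocPt_eq_zero hc hroot hMdeg τ n hMc

theorem Complex.re_eq_zero_of_I_mul_add_sub_eq_zero {z w g : ℂ} {r : ℝ} (hw : w.im = 0)
    (hg : g.im = 0) (h : Complex.I * z + w - r * g = 0) : z.re = 0 := by
  simpa [hw, hg] using congrArg Complex.im h

theorem mass_conservation_general
    (k N : ℕ) (T : ℝ) (hT : 0 < T)
    -- the Gauss points of [-1,1]: the k roots of the Legendre polynomial of degree k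
    (c : Fin k → ℝ) (hmono : StrictMono c)
    (hroot : ∀ j, (legendre k).eval (c j) = 0)
    (hmem : ∀ j, c j ∈ Set.Ioo (-1 : ℝ) 1)
    -- V : a finite-dimensional complex inner product space
    (V : Type*) [NormedAddCommGroup V] [InnerProductSpace ℂ V]
    -- a : a Hermitian sesquilinear form (paper's convention: linear in the first argument)
    (a : V → V → ℂ)
    (ha_herm : ∀ v w : V, a v w = starRingEnd ℂ (a w v))
    -- G : an arbitrary map such that ⟨G v, v⟩ is real
    -- (paper's ⟨x, y⟩, linear in x, is Mathlib's `inner y x`)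
    (G : V → V)
    (hG : ∀ v : V, (inner ℂ v (G v) : ℂ).im = 0)
    -- numerical solution: continuous, piecewise polynomial of degree ≤ k in time
    (uh : ℝ → V) (rh : ℝ → ℝ)
    (hupoly : ∀ n ∈ Finset.Icc 1 N, ∃ p : ℝ → V, IsPolyDeg V k p ∧
      ∀ t ∈ Set.Icc (((n : ℝ) - 1) * (T / N)) ((n : ℝ) * (T / N)), uh t = p t)
    -- Gauss collocation equation (i):  i⟨u_h'(t_nj), v⟩ + a(u_h(t_nj), v)
    --   - r_h(t_nj) ⟨G(u_h(t_nj)), v⟩ = 0  for all v ∈ V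
    (hu_eq : ∀ n ∈ Finset.Icc 1 N, ∀ j : Fin k, ∀ v : V,
      Complex.I * (inner ℂ v (deriv uh (collocPt (T / N) n (c j))) : ℂ)
        + a (uh (collocPt (T / N) n (c j))) v
        - (rh (collocPt (T / N) n (c j)) : ℂ)
            * (inner ℂ v (G (uh (collocPt (T / N) n (c j)))) : ℂ) = 0) :
    -- conclusion: mass conservation ‖u_h(t_n)‖ = ‖u_h(0)‖ for n = 1, ..., N
    ∀ n ∈ Finset.Icc 1 N, ‖uh ((n : ℝ) * (T / N))‖ = ‖uh 0‖ := by
  let _ := InnerProductSpace.rclikeToReal ℂ V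
  intro n hn
  obtain ⟨hn1, hnN⟩ := Finset.mem_Icc.1 hn
  have hτ : 0 < T / N := div_pos hT (by norm_cast; omega)
  have step : ∀ m ∈ Finset.Icc 1 N, ‖uh (m * (T / N))‖ = ‖uh ((m - 1) * (T / N))‖ := by
    intro m hm
    obtain ⟨p, hp, hup⟩ := hupoly m hm
    exact norm_eq_of_inner_deriv_collocPt_eq_zero hmono.injective hroot hmem hτ hp hup fun j =>
      Complex.re_eq_zero_of_I_mul_add_sub_eq_zero (Complex.conj_eq_iff_im.1 (ha_herm _ _).symm)
        (hG _) (hu_eq m hm j _)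
  clear hn
  induction n with
  | zero => omega
  | succ n ih =>
    rw [step (n + 1) (Finset.mem_Icc.2 ⟨hn1, hnN⟩), Nat.cast_succ, add_sub_cancel_right]
    rcases Nat.eq_zero_or_pos n with rfl | hn0
    · simp
    · exact ih hn0 (by omega)

theorem mass_conservation
    (k N : ℕ) (hk : 1 ≤ k) (hN : 1 ≤ N) (T : ℝ) (hT : 0 < T)
    -- the Gauss points of [-1,1]: the k roots of the Legendre polynomial of degree k
    (c : Fin k → ℝ) (hmono : StrictMono c)
    (hroot : ∀ j, (legendre k).eval (c j) = 0)
    (hmem : ∀ j, c j ∈ Set.Ioo (-1 : ℝ) 1)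
    -- V : a finite-dimensional complex inner product space
    (V : Type*) [NormedAddCommGroup V] [InnerProductSpace ℂ V] [FiniteDimensional ℂ V]
    -- a : a Hermitian sesquilinear form (paper's convention: linear in the first argument)
    (a : V → V → ℂ)
    (ha_add : ∀ v₁ v₂ w : V, a (v₁ + v₂) w = a v₁ w + a v₂ w)
    (ha_smul : ∀ (z : ℂ) (v w : V), a (z • v) w = z * a v w)
    (ha_herm : ∀ v w : V, a v w = starRingEnd ℂ (a w v))
    -- G : an arbitrary map such that ⟨G v, v⟩ is real
    -- (paper's ⟨x, y⟩, linear in x, is Mathlib's `inner y x`)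
    (G : V → V)
    (hG : ∀ v : V, (inner ℂ v (G v) : ℂ).im = 0)
    -- numerical solution: continuous, piecewise polynomial of degree ≤ k in time
    (uh : ℝ → V) (rh : ℝ → ℝ)
    (hupoly : ∀ n ∈ Finset.Icc 1 N, ∃ p : ℝ → V, IsPolyDeg V k p ∧
      ∀ t ∈ Set.Icc (((n : ℝ) - 1) * (T / N)) ((n : ℝ) * (T / N)), uh t = p t)
    (hrpoly : ∀ n ∈ Finset.Icc 1 N, ∃ q : ℝ → ℝ, IsPolyDeg ℝ k q ∧
      ∀ t ∈ Set.Icc (((n : ℝ) - 1) * (T / N)) ((n : ℝ) * (T / N)), rh t = q t)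
    -- Gauss collocation equation (i):  i⟨u_h'(t_nj), v⟩ + a(u_h(t_nj), v)
    --   - r_h(t_nj) ⟨G(u_h(t_nj)), v⟩ = 0  for all v ∈ V
    (hu_eq : ∀ n ∈ Finset.Icc 1 N, ∀ j : Fin k, ∀ v : V,
      Complex.I * (inner ℂ v (deriv uh (collocPt (T / N) n (c j))) : ℂ)
        + a (uh (collocPt (T / N) n (c j))) v
        - (rh (collocPt (T / N) n (c j)) : ℂ)
            * (inner ℂ v (G (uh (collocPt (T / N) n (c j)))) : ℂ) = 0)
    -- Gauss collocation equation (ii): r_h'(t_nj) = (1/2) Re ⟨G(u_h(t_nj)), u_h'(t_nj)⟩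
    (hr_eq : ∀ n ∈ Finset.Icc 1 N, ∀ j : Fin k,
      deriv rh (collocPt (T / N) n (c j))
        = (1 / 2) * ((inner ℂ (deriv uh (collocPt (T / N) n (c j)))
            (G (uh (collocPt (T / N) n (c j)))) : ℂ)).re) :
    -- conclusion: mass conservation ‖u_h(t_n)‖ = ‖u_h(0)‖ for n = 1, ..., N
    ∀ n ∈ Finset.Icc 1 N, ‖uh ((n : ℝ) * (T / N))‖ = ‖uh 0‖ :=
  mass_conservation_general k N T hT c hmono hroot hmem V a ha_herm G hG uh rh hupoly hu_eq
end

section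
/- Super-approximation property of the temporal L² projection (Lemma 3.4): let X be a complex Hilbert space, k ≥ 1 an integer, I = [a, a+τ] with 0 < τ ≤ 1, and let w : I → B(X) be a k-times continuously differentiable map into the bounded linear operators on X. Then there exists a constant C depending only on k and on max_{0≤j≤k} sup_{t∈I} ‖w^{(j)}(t)‖_{B(X)} (independent of τ and v) such that for every X-valued polynomial v of degree ≤ k−1, the function (wv)(t) := w(t)v(t) satisfies ‖wv − P(wv)‖_{L²(I;X)} ≤ C·τ·‖v‖_{L²(I;X)}, where ‖f‖_{L²(I;X)} := (∫_I ‖f(t)‖² dt)^{1/2}. (In the paper, w(t) is the operator of pointwise multiplication by a smooth function, acting on X = H^s(Ω) or X = ℝ.) -/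
/-!
Comparing `P(wv)` with the polynomial `q(t) := w(a) v(t)`: since `P` is the orthogonal
projection, `‖wv − P(wv)‖ ≤ ‖wv − q‖` in `L²(I; X)`, and by the mean value inequality
`‖w(t) v(t) − w(a) v(t)‖ ≤ τ sup ‖w'‖ ‖v(t)‖` pointwise on `I`.
-/

open MeasureTheory

universe u

/-- `p` is the L²(a,b)-orthogonal projection of `u` onto `X`-valued polynomials of
degree ≤ k-1. -/
def IsL2ProjOn (X : Type*) [NormedAddCommGroup X] [InnerProductSpace ℂ X]
    (a b : ℝ) (k : ℕ) (u p : ℝ → X) : Prop :=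
  IsPolyDeg X (k - 1) p ∧
    ∀ χ : ℝ → X, IsPolyDeg X (k - 1) χ →
      (∫ t in a..b, (inner ℂ (u t - p t) (χ t) : ℂ)) = 0

open Set

namespace IsPolyDeg

variable {X : Type*} {m : ℕ}

lemma sub [AddCommGroup X] [Module ℝ X] {f g : ℝ → X} (hf : IsPolyDeg X m f)
    (hg : IsPolyDeg X m g) : IsPolyDeg X m (fun t => f t - g t) := by
  obtain ⟨φ, hφ⟩ := hf
  obtain ⟨ψ, hψ⟩ := hg
  exact ⟨φ - ψ, fun t => by simp [hφ, hψ, smul_sub, Finset.sum_sub_distrib]⟩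

lemma comp_linearMap [AddCommGroup X] [Module ℝ X] {Y : Type*} [AddCommGroup Y] [Module ℝ Y]
    {f : ℝ → X} (hf : IsPolyDeg X m f) (L : X →ₗ[ℝ] Y) :
    IsPolyDeg Y m (fun t => L (f t)) := by
  obtain ⟨φ, hφ⟩ := hf
  exact ⟨fun i => L (φ i), fun t => by simp [hφ]⟩

lemma continuous [NormedAddCommGroup X] [NormedSpace ℝ X] {f : ℝ → X} (hf : IsPolyDeg X m f) :
    Continuous f := by
  obtain ⟨φ, hφ⟩ := hf
  rw [funext hφ]
  fun_prop

end IsPolyDeg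

lemma integral_norm_sub_sq_le_of_integral_inner_eq_zero {𝕜 E : Type*} [RCLike 𝕜]
    [NormedAddCommGroup E] [InnerProductSpace 𝕜 E] {u p q : ℝ → E} {a b : ℝ} (hab : a ≤ b)
    (hu : Continuous u) (hp : Continuous p) (hq : Continuous q)
    (horth : ∫ t in a..b, inner 𝕜 (u t - p t) (p t - q t) = 0) :
    ∫ t in a..b, ‖u t - p t‖ ^ 2 ≤ ∫ t in a..b, ‖u t - q t‖ ^ 2 := by
  have hexpand : ∀ t, ‖u t - q t‖ ^ 2 = ‖u t - p t‖ ^ 2 +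
      (2 * RCLike.re (inner 𝕜 (u t - p t) (p t - q t)) + ‖p t - q t‖ ^ 2) :=
    fun t => by rw [← sub_add_sub_cancel (u t) (p t) (q t), norm_add_sq (𝕜 := 𝕜), add_assoc]
  have hre : ∫ t in a..b, RCLike.re (inner 𝕜 (u t - p t) (p t - q t)) = 0 := by
    rw [intervalIntegral.intervalIntegral_re
      (((hu.sub hp).inner (hp.sub hq)).intervalIntegrable a b), horth, map_zero]
  have hup : Continuous fun t => ‖u t - p t‖ ^ 2 := (hu.sub hp).norm.pow 2
  have hcross : Continuous fun t => 2 * RCLike.re (inner 𝕜 (u t - p t) (p t - q t)) :=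
    continuous_const.mul (RCLike.continuous_re.comp ((hu.sub hp).inner (hp.sub hq)))
  have hpq : Continuous fun t => ‖p t - q t‖ ^ 2 := (hp.sub hq).norm.pow 2
  simp_rw [hexpand]
  rw [intervalIntegral.integral_add (hup.intervalIntegrable a b)
      ((hcross.intervalIntegrable a b).add (hpq.intervalIntegrable a b)),
    intervalIntegral.integral_add (hcross.intervalIntegrable a b) (hpq.intervalIntegrable a b),
    intervalIntegral.integral_const_mul, hre, mul_zero, zero_add, le_add_iff_nonneg_right]
  exact intervalIntegral.integral_nonneg hab fun t _ => sq_nonneg _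

lemma IsL2ProjOn.integral_norm_sub_sq_le {X : Type*} [NormedAddCommGroup X]
    [InnerProductSpace ℂ X] {a b : ℝ} {k : ℕ} {u p q : ℝ → X} (hp : IsL2ProjOn X a b k u p)
    (hab : a ≤ b) (hu : Continuous u) (hq : IsPolyDeg X (k - 1) q) :
    ∫ t in a..b, ‖u t - p t‖ ^ 2 ≤ ∫ t in a..b, ‖u t - q t‖ ^ 2 :=
  integral_norm_sub_sq_le_of_integral_inner_eq_zero hab hu hp.1.continuous hq.continuous
    (hp.2 _ (hp.1.sub hq))

lemma norm_apply_sub_apply_le_of_norm_deriv_le {𝕜 E F : Type*} [NontriviallyNormedField 𝕜]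
    [NormedAddCommGroup E] [NormedSpace 𝕜 E] [NormedAddCommGroup F] [NormedSpace 𝕜 F]
    [NormedSpace ℝ F] [SMulCommClass 𝕜 ℝ F] {w : ℝ → E →L[𝕜] F} {a b L : ℝ}
    (hw : Differentiable ℝ w)
    (bound : ∀ t ∈ Icc a b, ‖deriv w t‖ ≤ L) {t : ℝ} (ht : t ∈ Icc a b) (x : E) :
    ‖w t x - w a x‖ ≤ L * (b - a) * ‖x‖ := by
  have hmvt : ‖w t - w a‖ ≤ L * (t - a) :=
    norm_image_sub_le_of_norm_deriv_le_segment' (fun s _ => (hw s).hasDerivAt.hasDerivWithinAt)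
      (fun s hs => bound s (Ico_subset_Icc_self hs)) t ht
  have hL : 0 ≤ L := (norm_nonneg _).trans (bound t ht)
  calc ‖w t x - w a x‖ = ‖(w t - w a) x‖ := rfl
    _ ≤ ‖w t - w a‖ * ‖x‖ := (w t - w a).le_opNorm x
    _ ≤ L * (b - a) * ‖x‖ := by
      gcongr
      exact hmvt.trans (by gcongr; exact ht.2)

lemma sqrt_integral_norm_sq_le_of_norm_le {E F : Type*} [NormedAddCommGroup E]
    [NormedAddCommGroup F] {f : ℝ → E} {g : ℝ → F} {a b c : ℝ} (hab : a ≤ b) (hc : 0 ≤ c)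
    (hf : Continuous f) (hg : Continuous g) (h : ∀ t ∈ Icc a b, ‖f t‖ ≤ c * ‖g t‖) :
    √(∫ t in a..b, ‖f t‖ ^ 2) ≤ c * √(∫ t in a..b, ‖g t‖ ^ 2) := by
  have hsq : ∫ t in a..b, ‖f t‖ ^ 2 ≤ c ^ 2 * ∫ t in a..b, ‖g t‖ ^ 2 := by
    rw [← intervalIntegral.integral_const_mul]
    refine intervalIntegral.integral_mono_on hab ((hf.norm.pow 2).intervalIntegrable a b)
      ((continuous_const.mul (hg.norm.pow 2)).intervalIntegrable a b) fun t ht => ?_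
    rw [← mul_pow]
    exact pow_le_pow_left₀ (norm_nonneg _) (h t ht) 2
  calc √(∫ t in a..b, ‖f t‖ ^ 2)
      ≤ √(c ^ 2 * ∫ t in a..b, ‖g t‖ ^ 2) := Real.sqrt_le_sqrt hsq
    _ = c * √(∫ t in a..b, ‖g t‖ ^ 2) := by rw [Real.sqrt_mul (sq_nonneg c), Real.sqrt_sq hc]

theorem l2proj_superapproximation (k : ℕ) (hk : 1 ≤ k) (M : ℝ) :
    -- C depends only on k and on the bound M for max_{0≤j≤k} sup_{t∈I} ‖w^{(j)}(t)‖
    ∃ C : ℝ, 0 < C ∧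
      -- X : a complex Hilbert space
      ∀ (X : Type u) [NormedAddCommGroup X] [InnerProductSpace ℂ X] [CompleteSpace X],
      ∀ (a τ : ℝ), 0 < τ → τ ≤ 1 →
      -- w : a k-times continuously differentiable map into bounded linear operators on X
      ∀ w : ℝ → X →L[ℂ] X, ContDiff ℝ k w →
        (∀ j ≤ k, ∀ t ∈ Set.Icc a (a + τ), ‖iteratedDeriv j w t‖ ≤ M) →
      -- v : an X-valued polynomial of degree ≤ k-1
      ∀ v : ℝ → X, IsPolyDeg X (k - 1) v →
      ∀ p : ℝ → X, IsL2ProjOn X a (a + τ) k (fun t => w t (v t)) p →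
        Real.sqrt (∫ t in a..(a + τ), ‖w t (v t) - p t‖ ^ 2)
          ≤ C * τ * Real.sqrt (∫ t in a..(a + τ), ‖v t‖ ^ 2) := by
  refine ⟨|M| + 1, by positivity, fun X _ _ _ a τ hτ _ w hw hwM v hv p hp => ?_⟩
  have hab : a ≤ a + τ := by linarith
  have hw₁ : Differentiable ℝ w :=
    hw.differentiable (by exact_mod_cast Nat.one_le_iff_ne_zero.mp hk)
  have hwc : Continuous fun t => w t (v t) := hw.continuous.clm_apply hv.continuous
  have hderiv : ∀ t ∈ Icc a (a + τ), ‖deriv w t‖ ≤ |M| := fun t ht => by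
    simpa using (hwM 1 hk t ht).trans (le_abs_self M)
  have hclose : ∀ t ∈ Icc a (a + τ), ‖w t (v t) - w a (v t)‖ ≤ |M| * τ * ‖v t‖ :=
    fun t ht => by simpa using norm_apply_sub_apply_le_of_norm_deriv_le hw₁ hderiv ht (v t)
  calc √(∫ t in a..(a + τ), ‖w t (v t) - p t‖ ^ 2)
      ≤ √(∫ t in a..(a + τ), ‖w t (v t) - w a (v t)‖ ^ 2) :=
        Real.sqrt_le_sqrt <| hp.integral_norm_sub_sq_le hab hwc
          (hv.comp_linearMap ((w a : X →ₗ[ℂ] X).restrictScalars ℝ))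
    _ ≤ |M| * τ * √(∫ t in a..(a + τ), ‖v t‖ ^ 2) :=
        sqrt_integral_norm_sq_le_of_norm_le hab (by positivity)
          (hwc.sub ((w a).continuous.comp hv.continuous)) hv.continuous hclose
    _ ≤ (|M| + 1) * τ * √(∫ t in a..(a + τ), ‖v t‖ ^ 2) := by gcongr; linarith
end

section
/- Control of a degree-k polynomial by its projection and initial value (inequality (3.11)): let X be a complex Hilbert space and k ≥ 1 an integer. There exists a constant C depending only on k (independent of τ, u and X) such that for every interval I = [a, a+τ] with τ > 0 and every X-valued polynomial u of degree ≤ k, ∫_I ‖u(t)‖² dt ≤ C·∫_I ‖(Pu)(t)‖² dt + C·τ·‖u(a)‖². -/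
/-!
Write `u = Pu + w`. The remainder `w` has degree `≤ k` and is orthogonal to all polynomials of
degree `< k`, so after the affine change of variables to `[0, 1]` it equals `L(s) • ξ` for a single
vector `ξ`, where `L` is the monic shifted Legendre polynomial of degree `k`. Hence
`∫ ‖u‖² = ∫ ‖Pu‖² + (∫ L²) ‖ξ‖²` and `L(0) • ξ = u(0) - (Pu)(0)` with `L(0) ≠ 0`. Finally
`‖(Pu)(0)‖² ≤ (∫ W²) ∫ ‖Pu‖²`, where the scalar polynomial `W` represents evaluation at `0` on
polynomials of degree `< k`. All constants come from the scalar polynomials `L` and `W`, so they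
do not depend on `X`.
-/

open MeasureTheory

universe u

open Set Polynomial

theorem eqOn_zero_of_intervalIntegral_eq_zero {g : ℝ → ℝ} {a b : ℝ} (hab : a < b)
    (hg : Continuous g) (hg0 : ∀ x ∈ Icc a b, 0 ≤ g x) (hint : ∫ x in a..b, g x = 0) : EqOn g 0 (Icc a b) := by
  have hnonneg : 0 ≤ᵐ[volume.restrict (Ioc a b)] g :=
    (ae_restrict_iff' measurableSet_Ioc).2 (.of_forall fun x hx => hg0 x (Ioc_subset_Icc_self hx))
  rw [intervalIntegral.integral_eq_zero_iff_of_le_of_nonneg_ae hab.le hnonneg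
    (hg.intervalIntegrable _ _), Measure.restrict_congr_set Ioc_ae_eq_Icc] at hint
  exact Measure.eqOn_Icc_of_ae_eq volume hab.ne hint hg.continuousOn continuousOn_const

theorem sq_intervalIntegral_mul_le {f g : ℝ → ℝ} {a b : ℝ} (hab : a ≤ b) (hf : Continuous f)
    (hg : Continuous g) :
    (∫ x in a..b, f x * g x) ^ 2 ≤ (∫ x in a..b, f x ^ 2) * ∫ x in a..b, g x ^ 2 := by
  have hquad : ∀ r : ℝ, 0 ≤ (∫ x in a..b, f x ^ 2) * (r * r) + 2 * (∫ x in a..b, f x * g x) * r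
      + ∫ x in a..b, g x ^ 2 := by
    intro r
    have hexp : ∀ x, (r * f x + g x) ^ 2 = r * r * f x ^ 2 + 2 * r * (f x * g x) + g x ^ 2 :=
      fun x => by ring
    have h := intervalIntegral.integral_nonneg (μ := volume) hab
      fun x _ => sq_nonneg (r * f x + g x)
    simp_rw [hexp] at h
    rw [intervalIntegral.integral_add (by apply Continuous.intervalIntegrable; fun_prop)
        (by apply Continuous.intervalIntegrable; fun_prop),
      intervalIntegral.integral_add (by apply Continuous.intervalIntegrable; fun_prop)
        (by apply Continuous.intervalIntegrable; fun_prop),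
      intervalIntegral.integral_const_mul, intervalIntegral.integral_const_mul] at h
    linarith
  have := discrim_le_zero hquad
  rw [discrim] at this
  nlinarith

theorem integral_comp_mul_add_unitInterval {E : Type*} [NormedAddCommGroup E] [NormedSpace ℝ E]
    (f : ℝ → E) {τ : ℝ} (hτ : τ ≠ 0) (a : ℝ) :
    ∫ s in (0 : ℝ)..1, f (τ * s + a) = τ⁻¹ • ∫ t in a..a + τ, f t := by
  rw [intervalIntegral.integral_comp_mul_add f hτ a]
  norm_num [add_comm]

namespace Polynomial

theorem mem_degreeLT_succ_iff {R : Type*} [Semiring R] {n : ℕ} {P : R[X]} :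
    P ∈ degreeLT R (n + 1) ↔ P.natDegree ≤ n := by
  rw [degreeLT_succ_eq_degreeLE, mem_degreeLE, natDegree_le_iff_degree_le]

noncomputable def l2Inner : ℝ[X] →ₗ[ℝ] ℝ[X] →ₗ[ℝ] ℝ :=
  LinearMap.mk₂ ℝ (fun P Q : ℝ[X] => ∫ s in (0 : ℝ)..1, P.eval s * Q.eval s)
    (fun P P' Q => by
      simp only [eval_add, add_mul]
      exact intervalIntegral.integral_add ((P.continuous.mul Q.continuous).intervalIntegrable _ _)
        ((P'.continuous.mul Q.continuous).intervalIntegrable _ _))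
    (fun c P Q => by
      simp only [eval_smul, smul_eq_mul, mul_assoc, intervalIntegral.integral_const_mul])
    (fun P Q Q' => by
      simp only [eval_add, mul_add]
      exact intervalIntegral.integral_add ((P.continuous.mul Q.continuous).intervalIntegrable _ _)
        ((P.continuous.mul Q'.continuous).intervalIntegrable _ _))
    (fun c P Q => by
      simp only [eval_smul, smul_eq_mul, mul_left_comm, intervalIntegral.integral_const_mul])

theorem l2Inner_apply (P Q : ℝ[X]) : l2Inner P Q = ∫ s in (0 : ℝ)..1, P.eval s * Q.eval s := rfl

theorem l2Inner_self_nonneg (P : ℝ[X]) : 0 ≤ l2Inner P P :=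
  intervalIntegral.integral_nonneg zero_le_one fun _ _ => mul_self_nonneg _

theorem eq_zero_of_l2Inner_self_eq_zero {P : ℝ[X]} (hP : l2Inner P P = 0) : P = 0 := by
  have hvanish := eqOn_zero_of_intervalIntegral_eq_zero (g := fun s => P.eval s * P.eval s)
    zero_lt_one (P.continuous.mul P.continuous) (fun s _ => mul_self_nonneg _) hP
  refine eq_zero_of_infinite_isRoot P ((Icc_infinite zero_lt_one).mono fun s hs => ?_)
  exact mul_self_eq_zero.mp (hvanish hs)

theorem exists_l2Inner_eq (n : ℕ) (Λ : Module.Dual ℝ (degreeLT ℝ n)) :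
    ∃ q : degreeLT ℝ n, ∀ P : degreeLT ℝ n, l2Inner q P = Λ P := by
  let B := l2Inner.compl₁₂ (degreeLT ℝ n).subtype (degreeLT ℝ n).subtype
  have : FiniteDimensional ℝ (degreeLT ℝ n) := (degreeLTEquiv ℝ n).symm.finiteDimensional
  have hinj : Function.Injective B := by
    rw [← LinearMap.ker_eq_bot, LinearMap.ker_eq_bot']
    intro q hq
    exact Subtype.ext (eq_zero_of_l2Inner_self_eq_zero (LinearMap.congr_fun hq q))
  obtain ⟨q, hq⟩ := (LinearMap.injective_iff_surjective_of_finrank_eq_finrank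
    Subspace.dual_finrank_eq.symm).mp hinj Λ
  exact ⟨q, fun P => LinearMap.congr_fun hq P⟩

/-- Otherwise `L = X * L.divX`, and pairing `L` with `L.divX` gives `∫ s L.divX(s)² = 0`. -/
theorem eval_zero_ne_zero_of_l2Inner_eq_zero {m : ℕ} {L : ℝ[X]} (hL : L ≠ 0)
    (hdeg : L.natDegree ≤ m + 1) (horth : ∀ P ∈ degreeLT ℝ (m + 1), l2Inner L P = 0) :
    L.eval 0 ≠ 0 := by
  intro h0
  have hL_eq : L = L.divX * X := by
    simpa [coeff_zero_eq_eval_zero, h0] using (divX_mul_X_add L).symm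
  have hL_eval : ∀ s, L.eval s = s * L.divX.eval s := fun s => by
    nth_rewrite 1 [hL_eq]
    rw [eval_mul, eval_X, mul_comm]
  have hdivX : L.divX ∈ degreeLT ℝ (m + 1) := by
    rw [mem_degreeLT_succ_iff, natDegree_divX_eq_natDegree_tsub_one]
    omega
  have hint : ∫ s in (0 : ℝ)..1, s * (L.divX.eval s) ^ 2 = 0 := by
    convert horth _ hdivX using 1
    exact intervalIntegral.integral_congr fun s _ => by rw [hL_eval]; ring
  have hvanish := eqOn_zero_of_intervalIntegral_eq_zero (g := fun s => s * L.divX.eval s ^ 2)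
    zero_lt_one (continuous_id.mul (L.divX.continuous.pow 2))
    (fun s hs => mul_nonneg hs.1 (sq_nonneg _)) hint
  have : L.divX = 0 := by
    refine eq_zero_of_infinite_isRoot _ ((Ioc_infinite zero_lt_one).mono fun s hs => ?_)
    simpa [hs.1.ne'] using hvanish (Ioc_subset_Icc_self hs)
  exact hL (by rw [hL_eq, this, zero_mul])

theorem exists_X_pow_sub_l2Inner_eq_zero (m : ℕ) : ∃ q ∈ degreeLT ℝ (m + 1),
    (∀ P ∈ degreeLT ℝ (m + 1), l2Inner (X ^ (m + 1) - q) P = 0) ∧ (X ^ (m + 1) - q).eval 0 ≠ 0 := by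
  obtain ⟨⟨q, hqdeg⟩, hq⟩ :=
    exists_l2Inner_eq (m + 1) ((l2Inner (X ^ (m + 1))).comp (degreeLT ℝ (m + 1)).subtype)
  have horth : ∀ P ∈ degreeLT ℝ (m + 1), l2Inner (X ^ (m + 1) - q) P = 0 := fun P hP => by
    simpa [sub_eq_zero] using (hq ⟨P, hP⟩).symm
  have hdeg : (X ^ (m + 1) - q).natDegree ≤ m + 1 := (natDegree_sub_le _ _).trans
    (max_le (natDegree_X_pow_le _) ((mem_degreeLT_succ_iff.1 hqdeg).trans m.le_succ))
  exact ⟨q, hqdeg, horth, eval_zero_ne_zero_of_l2Inner_eq_zero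
    (monic_X_pow_sub (mem_degreeLT.1 hqdeg)).ne_zero hdeg horth⟩

theorem exists_l2Inner_eq_eval_zero (n : ℕ) :
    ∃ W : ℝ[X], ∀ P ∈ degreeLT ℝ n, l2Inner W P = P.eval 0 := by
  obtain ⟨W, hW⟩ := exists_l2Inner_eq n ((lcoeff ℝ 0).comp (degreeLT ℝ n).subtype)
  exact ⟨W, fun P hP => by simpa [coeff_zero_eq_eval_zero] using hW ⟨P, hP⟩⟩

end Polynomial

section PolyDeg

variable {E F : Type*} [AddCommGroup E] [Module ℝ E] [AddCommGroup F] [Module ℝ F] {m : ℕ}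

variable (E m) in
def polyDeg : Submodule ℝ (ℝ → E) where
  carrier := {f | IsPolyDeg E m f}
  add_mem' := by
    rintro f g ⟨φ, hf⟩ ⟨ψ, hg⟩
    exact ⟨φ + ψ, fun t => by simp [hf, hg, smul_add, Finset.sum_add_distrib]⟩
  zero_mem' := ⟨0, by simp⟩
  smul_mem' := by
    rintro c f ⟨φ, hf⟩
    exact ⟨c • φ, fun t => by simp [hf, Finset.smul_sum, smul_comm c]⟩

theorem eval_smul_mem_polyDeg {P : ℝ[X]} (hP : P ∈ degreeLT ℝ (m + 1)) (ξ : E) :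
    (fun t => P.eval t • ξ) ∈ polyDeg E m :=
  ⟨fun i => degreeLTEquiv ℝ (m + 1) ⟨P, hP⟩ i • ξ, fun t => by
    simp [eval_eq_sum_degreeLTEquiv hP, Finset.sum_smul, smul_smul, mul_comm]⟩

theorem exists_eval_eq_of_mem_polyDeg {f : ℝ → ℝ} (hf : f ∈ polyDeg ℝ m) :
    ∃ P ∈ degreeLT ℝ (m + 1), ∀ t, f t = P.eval t := by
  obtain ⟨φ, hφ⟩ := hf
  set P := (degreeLTEquiv ℝ (m + 1)).symm φ
  refine ⟨P, P.2, fun t => ?_⟩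
  simp [hφ, eval_eq_sum_degreeLTEquiv P.2, P, mul_comm]

theorem comp_mul_add_mem_polyDeg {f : ℝ → E} (hf : f ∈ polyDeg E m) (c d : ℝ) :
    (fun s => f (c * s + d)) ∈ polyDeg E m := by
  obtain ⟨φ, hφ⟩ := hf
  have hterm : ∀ i : Fin (m + 1), (fun s => (c * s + d) ^ (i : ℕ) • φ i) ∈ polyDeg E m := by
    intro i
    have hdeg : (C c * X + C d) ^ (i : ℕ) ∈ degreeLT ℝ (m + 1) :=
      mem_degreeLT_succ_iff.2 (natDegree_pow_le.trans
        (by nlinarith [natDegree_linear_le (a := c) (b := d), i.is_le]))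
    simpa using eval_smul_mem_polyDeg hdeg (φ i)
  simpa [hφ, Finset.sum_fn] using Submodule.sum_mem _ fun i _ => hterm i

theorem exists_eq_add_pow_smul_of_mem_polyDeg {f : ℝ → E} (hf : f ∈ polyDeg E (m + 1)) :
    ∃ g ∈ polyDeg E m, ∃ ξ : E, ∀ t, f t = g t + t ^ (m + 1) • ξ := by
  obtain ⟨φ, hφ⟩ := hf
  exact ⟨_, ⟨fun i => φ i.castSucc, fun t => rfl⟩, φ (Fin.last _), fun t => by
    rw [hφ, Fin.sum_univ_castSucc]; simp⟩

theorem comp_mem_polyDeg (T : E →ₗ[ℝ] F) {f : ℝ → E} (hf : f ∈ polyDeg E m) :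
    (fun t => T (f t)) ∈ polyDeg F m := by
  obtain ⟨φ, hφ⟩ := hf
  exact ⟨fun i => T (φ i), fun t => by simp [hφ]⟩

theorem continuous_of_mem_polyDeg [TopologicalSpace E] [ContinuousAdd E] [ContinuousSMul ℝ E]
    {f : ℝ → E} (hf : f ∈ polyDeg E m) : Continuous f := by
  obtain ⟨φ, hφ⟩ := hf
  rw [funext hφ]
  fun_prop

end PolyDeg

section InnerProduct

open scoped InnerProductSpace

variable {E : Type*} [NormedAddCommGroup E] [InnerProductSpace ℝ E] {m : ℕ}

theorem integral_inner_eval_smul_eq_zero {L : ℝ[X]}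
    (horth : ∀ P ∈ degreeLT ℝ (m + 1), l2Inner L P = 0) (ξ : E) {χ : ℝ → E}
    (hχ : χ ∈ polyDeg E m) : ∫ s in (0 : ℝ)..1, ⟪L.eval s • ξ, χ s⟫_ℝ = 0 := by
  obtain ⟨P, hP, hPχ⟩ := exists_eval_eq_of_mem_polyDeg (comp_mem_polyDeg (innerₗ E ξ) hχ)
  convert horth P hP using 1
  refine intervalIntegral.integral_congr fun s _ => ?_
  simp only [real_inner_smul_left, ← hPχ, innerₗ_apply_apply]

theorem integral_norm_add_eval_smul_sq {L : ℝ[X]}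
    (horth : ∀ P ∈ degreeLT ℝ (m + 1), l2Inner L P = 0) (ξ : E) {p : ℝ → E}
    (hp : p ∈ polyDeg E m) :
    ∫ s in (0 : ℝ)..1, ‖p s + L.eval s • ξ‖ ^ 2
      = (∫ s in (0 : ℝ)..1, ‖p s‖ ^ 2) + l2Inner L L * ‖ξ‖ ^ 2 := by
  have hpc := continuous_of_mem_polyDeg hp
  have hLc := L.continuous
  have hexp : ∀ s, ‖p s + L.eval s • ξ‖ ^ 2
      = ‖p s‖ ^ 2 + 2 * ⟪L.eval s • ξ, p s⟫_ℝ + ‖ξ‖ ^ 2 * (L.eval s * L.eval s) := fun s => by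
    rw [norm_add_sq_real, real_inner_comm, norm_smul, Real.norm_eq_abs, mul_pow, sq_abs]
    ring
  simp_rw [hexp]
  rw [intervalIntegral.integral_add (by apply Continuous.intervalIntegrable; fun_prop)
      (by apply Continuous.intervalIntegrable; fun_prop),
    intervalIntegral.integral_add (by apply Continuous.intervalIntegrable; fun_prop)
      (by apply Continuous.intervalIntegrable; fun_prop),
    intervalIntegral.integral_const_mul, intervalIntegral.integral_const_mul,
    integral_inner_eval_smul_eq_zero horth ξ hp, l2Inner_apply]
  ring

theorem norm_sq_eval_zero_le {W : ℝ[X]} (hW : ∀ P ∈ degreeLT ℝ (m + 1), l2Inner W P = P.eval 0)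
    {p : ℝ → E} (hp : p ∈ polyDeg E m) :
    ‖p 0‖ ^ 2 ≤ l2Inner W W * ∫ s in (0 : ℝ)..1, ‖p s‖ ^ 2 := by
  have hpc := continuous_of_mem_polyDeg hp
  have hWc := W.continuous
  obtain ⟨P, hP, hPp⟩ := exists_eval_eq_of_mem_polyDeg (comp_mem_polyDeg (innerₗ E (p 0)) hp)
  have hrepr : ‖p 0‖ ^ 2 = ∫ s in (0 : ℝ)..1, W.eval s * ⟪p 0, p s⟫_ℝ := by
    have h := hW P hP
    simp only [innerₗ_apply_apply] at hPp
    rw [← hPp, real_inner_self_eq_norm_sq, l2Inner_apply] at h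
    rw [← h]
    exact intervalIntegral.integral_congr fun s _ => by simp only [hPp]
  have hB : ‖p 0‖ ≤ ∫ s in (0 : ℝ)..1, |W.eval s| * ‖p s‖ := by
    have hle : ‖p 0‖ ^ 2 ≤ ‖p 0‖ * ∫ s in (0 : ℝ)..1, |W.eval s| * ‖p s‖ := by
      rw [hrepr, ← intervalIntegral.integral_const_mul]
      refine intervalIntegral.integral_mono_on zero_le_one
        (by apply Continuous.intervalIntegrable; fun_prop)
        (by apply Continuous.intervalIntegrable; fun_prop) fun s _ => ?_
      calc W.eval s * ⟪p 0, p s⟫_ℝ ≤ |W.eval s| * (‖p 0‖ * ‖p s‖) :=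
            (le_abs_self _).trans (by rw [abs_mul]; gcongr; exact abs_real_inner_le_norm _ _)
        _ = ‖p 0‖ * (|W.eval s| * ‖p s‖) := by ring
    have hnonneg : 0 ≤ ∫ s in (0 : ℝ)..1, |W.eval s| * ‖p s‖ :=
      intervalIntegral.integral_nonneg zero_le_one fun s _ => by positivity
    nlinarith [norm_nonneg (p 0)]
  calc ‖p 0‖ ^ 2 ≤ (∫ s in (0 : ℝ)..1, |W.eval s| * ‖p s‖) ^ 2 :=
        pow_le_pow_left₀ (norm_nonneg _) hB 2
    _ ≤ (∫ s in (0 : ℝ)..1, |W.eval s| ^ 2) * ∫ s in (0 : ℝ)..1, ‖p s‖ ^ 2 :=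
        sq_intervalIntegral_mul_le zero_le_one (by fun_prop) (by fun_prop)
    _ = l2Inner W W * ∫ s in (0 : ℝ)..1, ‖p s‖ ^ 2 := by
      simp only [sq, abs_mul_abs_self, l2Inner_apply]

/-- Subtracting `L • ξ`, with `L = X ^ (m + 1) - q` and `ξ` the leading coefficient of `u`, from
`u - p` leaves a polynomial of degree `≤ m` that is orthogonal to itself. -/
theorem exists_eqOn_add_eval_smul {q : ℝ[X]} (hq : q ∈ degreeLT ℝ (m + 1))
    (horth : ∀ P ∈ degreeLT ℝ (m + 1), l2Inner (X ^ (m + 1) - q) P = 0) {u p : ℝ → E}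
    (hu : u ∈ polyDeg E (m + 1)) (hp : p ∈ polyDeg E m)
    (hup : ∀ χ ∈ polyDeg E m, ∫ s in (0 : ℝ)..1, ⟪u s - p s, χ s⟫_ℝ = 0) :
    ∃ ξ : E, EqOn u (fun s => p s + (X ^ (m + 1) - q).eval s • ξ) (Icc 0 1) := by
  obtain ⟨g, hg, ξ, hgξ⟩ := exists_eq_add_pow_smul_of_mem_polyDeg hu
  set r : ℝ → E := fun s => g s - p s + q.eval s • ξ
  have hr : r ∈ polyDeg E m := add_mem (sub_mem hg hp) (eval_smul_mem_polyDeg hq ξ)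
  have hrc := continuous_of_mem_polyDeg hr
  have hur : ∀ s, u s - p s = (X ^ (m + 1) - q).eval s • ξ + r s := fun s => by
    simp only [r, hgξ, eval_sub, eval_pow, eval_X, sub_smul]
    abel
  have hrr : ∫ s in (0 : ℝ)..1, ‖r s‖ ^ 2 = 0 := by
    have h := hup r hr
    simp_rw [hur, inner_add_left] at h
    rw [intervalIntegral.integral_add (by apply Continuous.intervalIntegrable; fun_prop)
      (by apply Continuous.intervalIntegrable; fun_prop),
      integral_inner_eval_smul_eq_zero horth ξ hr, zero_add] at h
    simpa only [real_inner_self_eq_norm_sq] using h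
  have hr0 := eqOn_zero_of_intervalIntegral_eq_zero (g := fun s => ‖r s‖ ^ 2) zero_lt_one
    (by fun_prop) (fun _ _ => sq_nonneg _) hrr
  refine ⟨ξ, fun s hs => ?_⟩
  have hrs : r s = 0 := by simpa using hr0 hs
  rw [← sub_eq_zero, ← sub_sub, hur, hrs, add_zero, sub_self]

end InnerProduct

open scoped InnerProductSpace in
theorem exists_integral_norm_sq_le_unitInterval (m : ℕ) :
    ∃ C : ℝ, 0 < C ∧ ∀ (E : Type*) [NormedAddCommGroup E] [InnerProductSpace ℝ E] (u p : ℝ → E),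
      u ∈ polyDeg E (m + 1) → p ∈ polyDeg E m →
      (∀ χ ∈ polyDeg E m, ∫ s in (0 : ℝ)..1, ⟪u s - p s, χ s⟫_ℝ = 0) →
      ∫ s in (0 : ℝ)..1, ‖u s‖ ^ 2 ≤ C * (∫ s in (0 : ℝ)..1, ‖p s‖ ^ 2) + C * ‖u 0‖ ^ 2 := by
  obtain ⟨q, hq, horth, hL0⟩ := exists_X_pow_sub_l2Inner_eq_zero m
  set L : ℝ[X] := X ^ (m + 1) - q
  obtain ⟨W, hW⟩ := exists_l2Inner_eq_eval_zero (m + 1)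
  set K := l2Inner L L / L.eval 0 ^ 2 with hKdef
  have hK : 0 ≤ K := div_nonneg (l2Inner_self_nonneg L) (sq_nonneg _)
  have hγ := l2Inner_self_nonneg W
  refine ⟨1 + 2 * K * (1 + l2Inner W W), by positivity, fun E _ _ u p hu hp hup => ?_⟩
  obtain ⟨ξ, hξ⟩ := exists_eqOn_add_eval_smul hq horth hu hp hup
  have hsplit : ∫ s in (0 : ℝ)..1, ‖u s‖ ^ 2
      = (∫ s in (0 : ℝ)..1, ‖p s‖ ^ 2) + l2Inner L L * ‖ξ‖ ^ 2 := by
    rw [← integral_norm_add_eval_smul_sq horth ξ hp]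
    exact intervalIntegral.integral_congr fun s hs => by
      rw [hξ (by rwa [uIcc_of_le zero_le_one] at hs)]
  have hξ0 : L.eval 0 ^ 2 * ‖ξ‖ ^ 2 ≤ 2 * ‖u 0‖ ^ 2 + 2 * ‖p 0‖ ^ 2 := by
    have h0 : u 0 = p 0 + L.eval 0 • ξ := hξ (left_mem_Icc.2 zero_le_one)
    have hle : ‖L.eval 0 • ξ‖ ≤ ‖u 0‖ + ‖p 0‖ := by
      simpa [h0] using norm_sub_le (u 0) (p 0)
    have := pow_le_pow_left₀ (norm_nonneg _) hle 2
    rw [norm_smul, Real.norm_eq_abs, mul_pow, sq_abs] at this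
    nlinarith [sq_nonneg (‖u 0‖ - ‖p 0‖)]
  have hp0 := norm_sq_eval_zero_le hW hp
  have hP : 0 ≤ ∫ s in (0 : ℝ)..1, ‖p s‖ ^ 2 :=
    intervalIntegral.integral_nonneg zero_le_one fun _ _ => sq_nonneg _
  have hβ : l2Inner L L * ‖ξ‖ ^ 2 = K * (L.eval 0 ^ 2 * ‖ξ‖ ^ 2) := by
    rw [hKdef, ← mul_assoc, div_mul_cancel₀ _ (pow_ne_zero 2 hL0)]
  rw [hsplit, hβ]
  nlinarith [mul_le_mul_of_nonneg_left hξ0 hK, mul_le_mul_of_nonneg_left hp0 hK,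
    mul_nonneg hK hP, mul_nonneg (mul_nonneg hK hγ) (sq_nonneg ‖u 0‖), sq_nonneg ‖u 0‖]

theorem IsL2ProjOn.integral_re_inner_comp_mul_add_eq_zero {X : Type*} [NormedAddCommGroup X]
    [InnerProductSpace ℂ X] {a τ : ℝ} (hτ : τ ≠ 0) {k : ℕ} {u p : ℝ → X} (hu : Continuous u)
    (hp : IsL2ProjOn X a (a + τ) k u p) {χ : ℝ → X} (hχ : χ ∈ polyDeg X (k - 1)) :
    ∫ s in (0 : ℝ)..1, RCLike.re (inner ℂ (u (τ * s + a) - p (τ * s + a)) (χ s)) = 0 := by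
  set χ' : ℝ → X := fun t => χ (τ⁻¹ * t + -(τ⁻¹ * a))
  have hχ' : χ' ∈ polyDeg X (k - 1) := comp_mul_add_mem_polyDeg hχ _ _
  have hχ's : ∀ s, χ' (τ * s + a) = χ s := fun s => by
    simp only [χ']
    congr 1
    field_simp
    ring
  have hpc := continuous_of_mem_polyDeg hp.1
  have hχ'c := continuous_of_mem_polyDeg hχ'
  have h := congrArg RCLike.re (hp.2 χ' hχ')
  rw [← intervalIntegral.intervalIntegral_re (by apply Continuous.intervalIntegrable; fun_prop),
    map_zero] at h
  simp_rw [← hχ's]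
  rw [integral_comp_mul_add_unitInterval (fun t => RCLike.re (inner ℂ (u t - p t) (χ' t))) hτ a,
    h, smul_zero]

theorem poly_controlled_by_projection_and_initial_value (k : ℕ) (hk : 1 ≤ k) :
    -- C depends only on k (not on τ, u, X)
    ∃ C : ℝ, 0 < C ∧
      -- X : a complex Hilbert space
      ∀ (X : Type u) [NormedAddCommGroup X] [InnerProductSpace ℂ X] [CompleteSpace X],
      ∀ (a τ : ℝ), 0 < τ →
      ∀ u : ℝ → X, IsPolyDeg X k u →
      ∀ p : ℝ → X, IsL2ProjOn X a (a + τ) k u p →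
        (∫ t in a..(a + τ), ‖u t‖ ^ 2)
          ≤ C * (∫ t in a..(a + τ), ‖p t‖ ^ 2) + C * τ * ‖u a‖ ^ 2 := by
  obtain ⟨m, rfl⟩ : ∃ m, k = m + 1 := ⟨k - 1, by omega⟩
  obtain ⟨C, hC, hbound⟩ := exists_integral_norm_sq_le_unitInterval m
  refine ⟨C, hC, fun X _ _ _ a τ hτ u hu p hp => ?_⟩
  let : InnerProductSpace ℝ X := InnerProductSpace.complexToReal
  have hunit := hbound X (fun s => u (τ * s + a)) (fun s => p (τ * s + a))
    (comp_mul_add_mem_polyDeg hu τ a) (comp_mul_add_mem_polyDeg hp.1 τ a)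
    fun χ hχ => hp.integral_re_inner_comp_mul_add_eq_zero hτ.ne' (continuous_of_mem_polyDeg hu) hχ
  rw [integral_comp_mul_add_unitInterval (fun t => ‖u t‖ ^ 2) hτ.ne',
    integral_comp_mul_add_unitInterval (fun t => ‖p t‖ ^ 2) hτ.ne', mul_zero, zero_add,
    smul_eq_mul, smul_eq_mul] at hunit
  calc ∫ t in a..a + τ, ‖u t‖ ^ 2 = τ * (τ⁻¹ * ∫ t in a..a + τ, ‖u t‖ ^ 2) := by field_simp
    _ ≤ τ * (C * (τ⁻¹ * ∫ t in a..a + τ, ‖p t‖ ^ 2) + C * ‖u a‖ ^ 2) := by gcongr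
    _ = C * (∫ t in a..a + τ, ‖p t‖ ^ 2) + C * τ * ‖u a‖ ^ 2 := by field_simp
end
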